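/- arXiv:gr-qc/0501083 — 2 statements merged into one kernel-verified Lean document; each statement's English description precedes it below -/
import Mathlib

section
/- Let F : [0,∞) → [0,∞) be a continuous function with F(ζ) ≥ 0 and F differentiable with F'(ζ) < 1 for all ζ ≥ 0. Fix real numbers ρ ≥ 0 and j ≥ 0 with ρ² ≥ j². Then there exists a unique ζ ∈ [0, ρ] such that (ρ - ζ)(ρ + F(ζ)) = j². -/
/-- Perfect fluid inversion: existence and uniqueness of ζ ∈ [0,ρ] with
(ρ - ζ)(ρ + F(ζ)) = j². -/
theorem stmt_0 (F F' : ℝ → ℝ)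
    (hFc : ContinuousOn F (Set.Ici 0))
    (hFnonneg : ∀ ζ, 0 ≤ ζ → 0 ≤ F ζ)
    (hFd : ∀ ζ, 0 ≤ ζ → HasDerivAt F (F' ζ) ζ)
    (hF' : ∀ ζ, 0 ≤ ζ → F' ζ < 1)
    (ρ j : ℝ) (hρ : 0 ≤ ρ) (hj : 0 ≤ j) (hρj : j ^ 2 ≤ ρ ^ 2) :
    ∃! ζ : ℝ, ζ ∈ Set.Icc 0 ρ ∧ (ρ - ζ) * (ρ + F ζ) = j ^ 2 := by
  rcases eq_or_lt_of_le hρ with hρ0 | hρ0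
  · -- ρ = 0
    have hρ0' : ρ = 0 := hρ0.symm
    subst hρ0'
    have hj0 : j = 0 := by nlinarith
    subst hj0
    refine ⟨0, ⟨⟨le_refl 0, le_refl 0⟩, by ring⟩, ?_⟩
    rintro y ⟨⟨hy1, hy2⟩, -⟩
    linarith
  · set H : ℝ → ℝ := fun ζ => (ρ - ζ) * (ρ + F ζ) with hH
    have hHc : ContinuousOn H (Set.Icc 0 ρ) :=
      (continuousOn_const.sub continuousOn_id).mul
        (continuousOn_const.add (hFc.mono Set.Icc_subset_Ici_self))
    have hanti : StrictAntiOn H (Set.Icc 0 ρ) := by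
      apply strictAntiOn_of_deriv_neg (convex_Icc 0 ρ) hHc
      intro x hx
      rw [interior_Icc] at hx
      have hd : HasDerivAt H (-1 * (ρ + F x) + (ρ - x) * F' x) x := by
        exact ((hasDerivAt_id x).const_sub ρ).mul ((hFd x hx.1.le).const_add ρ)
      rw [hd.deriv]
      have h1 : (ρ - x) * F' x < (ρ - x) * 1 :=
        mul_lt_mul_of_pos_left (hF' x hx.1.le) (sub_pos.2 hx.2)
      have h2 : 0 ≤ F x := hFnonneg x hx.1.le
      nlinarith [hx.1]
    have hmem : j ^ 2 ∈ Set.Icc (H ρ) (H 0) := by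
      constructor
      · simp only [hH]
        nlinarith
      · simp only [hH]
        have := hFnonneg 0 le_rfl
        nlinarith
    obtain ⟨ζ, hζmem, hζeq⟩ := intermediate_value_Icc' hρ hHc hmem
    refine ⟨ζ, ⟨hζmem, hζeq⟩, ?_⟩
    rintro y ⟨hymem, hyeq⟩
    exact hanti.injOn hymem hζmem (hyeq.trans hζeq.symm)
end

section
/- Let n ≥ 3, λ ≥ n - 1, q = 4/(n-2), and X = (u,v) a pair of C¹ functions on [-T/2, T/2] vanishing at ±T/2. With the quadratic form Q(X) = ∫ ((n-1)/n)(u')² + (1/2)(v')² + ((n-2)/(2n))√λ(uv' - u'v) + (λ/2)u² + ((n-1)λ/n + 2 - n)v² ds, one has Q(X) ≥ (1/n)∫ (u² + v²) ds. -/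
open intervalIntegral Set MeasureTheory

private lemma key_alg (N lam s U V F G : ℝ) (hN : 3 ≤ N) (hlam : N - 1 ≤ lam)
    (hs : s ^ 2 = lam) :
    (1 / N) * (U ^ 2 + V ^ 2) ≤
      (N - 1) / N * F ^ 2 + (1 / 2) * G ^ 2
        + (N - 2) / (2 * N) * s * (2 * (U * G))
        + (lam / 2) * U ^ 2 + ((N - 1) * lam / N + 2 - N) * V ^ 2 := by
  subst hs
  have hN0 : (0:ℝ) < N := by linarith
  have hc : (0:ℝ) < 2 * N ^ 2 := by positivity
  have hU : 0 ≤ ((4 * N - 4) * s ^ 2 - 2 * N) * U ^ 2 := by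
    apply mul_nonneg _ (sq_nonneg U); nlinarith
  have hV : 0 ≤ (2 * N * (N - 1) * s ^ 2 - 2 * N ^ 3 + 4 * N ^ 2 - 2 * N) * V ^ 2 := by
    apply mul_nonneg _ (sq_nonneg V)
    nlinarith [mul_nonneg (mul_nonneg (by linarith : (0:ℝ) ≤ 2 * N)
      (by linarith : (0:ℝ) ≤ N - 1)) (by linarith : (0:ℝ) ≤ s ^ 2 - (N - 1))]
  have hF : 0 ≤ 2 * N * (N - 1) * F ^ 2 := by
    apply mul_nonneg _ (sq_nonneg F); nlinarith
  have hS : 0 ≤ (N * G + (N - 2) * s * U) ^ 2 := sq_nonneg _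
  have hsum : 0 ≤ 2 * N * (N - 1) * F ^ 2 + (N * G + (N - 2) * s * U) ^ 2
      + (((4 * N - 4) * s ^ 2 - 2 * N) * U ^ 2)
      + ((2 * N * (N - 1) * s ^ 2 - 2 * N ^ 3 + 4 * N ^ 2 - 2 * N) * V ^ 2) := by
    linarith
  have hexp : ((N - 1) / N * F ^ 2 + (1 / 2) * G ^ 2
        + (N - 2) / (2 * N) * s * (2 * (U * G))
        + (s ^ 2 / 2) * U ^ 2 + ((N - 1) * s ^ 2 / N + 2 - N) * V ^ 2
        - (1 / N) * (U ^ 2 + V ^ 2)) * (2 * N ^ 2)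
      = 2 * N * (N - 1) * F ^ 2 + (N * G + (N - 2) * s * U) ^ 2
      + (((4 * N - 4) * s ^ 2 - 2 * N) * U ^ 2)
      + ((2 * N * (N - 1) * s ^ 2 - 2 * N ^ 3 + 4 * N ^ 2 - 2 * N) * V ^ 2) := by
    field_simp
    ring
  have h2 := (mul_nonneg_iff_of_pos_right hc).1 (hexp ▸ hsum)
  linarith

/-- Core estimate of Proposition 5: the separated-variables quadratic form of
the vector Laplacian on the finite cylinder is ≥ (1/n)‖X‖² for spherical
eigenvalue λ ≥ n-1, uniformly in T. -/
theorem stmt_10 (n : ℕ) (hn : 3 ≤ n) (lam T q : ℝ)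
    (hq : q = 4 / ((n : ℝ) - 2)) (hlam : (n : ℝ) - 1 ≤ lam) (hT : 0 < T)
    (u v : ℝ → ℝ)
    (hu : ContDiffOn ℝ 1 u (Set.Icc (-T / 2) (T / 2)))
    (hv : ContDiffOn ℝ 1 v (Set.Icc (-T / 2) (T / 2)))
    (hu0 : u (-T / 2) = 0) (hu1 : u (T / 2) = 0)
    (hv0 : v (-T / 2) = 0) (hv1 : v (T / 2) = 0) :
    (∫ s in (-T / 2)..(T / 2),
        (((n : ℝ) - 1) / n) * (deriv u s) ^ 2 + (1 / 2) * (deriv v s) ^ 2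
          + (((n : ℝ) - 2) / (2 * n)) * Real.sqrt lam *
              (u s * deriv v s - deriv u s * v s)
          + (lam / 2) * (u s) ^ 2
          + ((((n : ℝ) - 1) * lam / n + 2 - (n : ℝ))) * (v s) ^ 2) ≥
    (1 / (n : ℝ)) * ∫ s in (-T / 2)..(T / 2), (u s) ^ 2 + (v s) ^ 2 := by
  have hn3 : (3:ℝ) ≤ (n:ℝ) := by exact_mod_cast hn
  have hlam0 : 0 ≤ lam := by linarith
  have hsq : Real.sqrt lam ^ 2 = lam := Real.sq_sqrt hlam0
  have hab : (-T / 2 : ℝ) < T / 2 := by linarith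
  have hle : (-T / 2 : ℝ) ≤ T / 2 := hab.le
  have huniq : UniqueDiffOn ℝ (Icc (-T / 2) (T / 2)) := uniqueDiffOn_Icc hab
  set f : ℝ → ℝ := derivWithin u (Icc (-T / 2) (T / 2)) with hfdef
  set g : ℝ → ℝ := derivWithin v (Icc (-T / 2) (T / 2)) with hgdef
  have hfc : ContinuousOn f (Icc (-T / 2) (T / 2)) :=
    hu.continuousOn_derivWithin huniq le_rfl
  have hgc : ContinuousOn g (Icc (-T / 2) (T / 2)) :=
    hv.continuousOn_derivWithin huniq le_rfl
  have huc : ContinuousOn u (Icc (-T / 2) (T / 2)) := hu.continuousOn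
  have hvc : ContinuousOn v (Icc (-T / 2) (T / 2)) := hv.continuousOn
  have hdu : ∀ s ∈ Ioo (-T / 2) (T / 2), HasDerivAt u (f s) s := by
    intro s hs
    have hmem : Icc (-T / 2) (T / 2) ∈ nhds s := Icc_mem_nhds hs.1 hs.2
    exact ((hu.differentiableOn one_ne_zero s
      (Ioo_subset_Icc_self hs)).hasDerivWithinAt).hasDerivAt hmem
  have hdv : ∀ s ∈ Ioo (-T / 2) (T / 2), HasDerivAt v (g s) s := by
    intro s hs
    have hmem : Icc (-T / 2) (T / 2) ∈ nhds s := Icc_mem_nhds hs.1 hs.2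
    exact ((hv.differentiableOn one_ne_zero s
      (Ioo_subset_Icc_self hs)).hasDerivWithinAt).hasDerivAt hmem
  -- integrability of the cross term
  have hcross_int : IntervalIntegrable (fun s => f s * v s + u s * g s)
      volume (-T / 2) (T / 2) := by
    apply ContinuousOn.intervalIntegrable
    rw [uIcc_of_le hle]
    exact (hfc.mul hvc).add (huc.mul hgc)
  -- FTC : the integral of (uv)' vanishes
  have hFTC : (∫ s in (-T / 2)..(T / 2), (f s * v s + u s * g s)) = 0 := by
    have h := intervalIntegral.integral_eq_sub_of_hasDeriv_right_of_le hle
      (f := fun s => u s * v s) (f' := fun s => f s * v s + u s * g s)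
      (huc.mul hvc)
      (fun s hs => (((hdu s hs).mul (hdv s hs)).hasDerivWithinAt))
      hcross_int
    rw [h]; simp [hu0, hu1]
  -- replace deriv by derivWithin inside the integral
  have step1 : (∫ s in (-T / 2)..(T / 2),
        (((n : ℝ) - 1) / n) * (deriv u s) ^ 2 + (1 / 2) * (deriv v s) ^ 2
          + (((n : ℝ) - 2) / (2 * n)) * Real.sqrt lam *
              (u s * deriv v s - deriv u s * v s)
          + (lam / 2) * (u s) ^ 2
          + ((((n : ℝ) - 1) * lam / n + 2 - (n : ℝ))) * (v s) ^ 2)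
      = (∫ s in (-T / 2)..(T / 2),
        (((n : ℝ) - 1) / n) * (f s) ^ 2 + (1 / 2) * (g s) ^ 2
          + (((n : ℝ) - 2) / (2 * n)) * Real.sqrt lam *
              (u s * g s - f s * v s)
          + (lam / 2) * (u s) ^ 2
          + ((((n : ℝ) - 1) * lam / n + 2 - (n : ℝ))) * (v s) ^ 2) := by
    apply intervalIntegral.integral_congr_ae
    have h1 : ∀ᵐ x : ℝ ∂volume, x ≠ T / 2 := by
      refine ae_iff.2 ?_
      have : {a : ℝ | ¬a ≠ T / 2} = {T / 2} := by ext x; simp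
      rw [this, Real.volume_singleton]
    filter_upwards [h1] with x hx hmem
    rw [uIoc_of_le hle] at hmem
    have hxIoo : x ∈ Ioo (-T / 2) (T / 2) := ⟨hmem.1, lt_of_le_of_ne hmem.2 hx⟩
    rw [(hdu x hxIoo).deriv, (hdv x hxIoo).deriv]
  -- integrability of the two comparison integrands
  have hG_int : IntervalIntegrable (fun s =>
        (((n : ℝ) - 1) / n) * (f s) ^ 2 + (1 / 2) * (g s) ^ 2
          + (((n : ℝ) - 2) / (2 * n)) * Real.sqrt lam *
              (u s * g s - f s * v s)
          + (lam / 2) * (u s) ^ 2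
          + ((((n : ℝ) - 1) * lam / n + 2 - (n : ℝ))) * (v s) ^ 2)
      volume (-T / 2) (T / 2) := by
    apply ContinuousOn.intervalIntegrable
    rw [uIcc_of_le hle]
    fun_prop
  have hG2_int : IntervalIntegrable (fun s =>
        (((n : ℝ) - 1) / n) * (f s) ^ 2 + (1 / 2) * (g s) ^ 2
          + (((n : ℝ) - 2) / (2 * n)) * Real.sqrt lam * (2 * (u s * g s))
          + (lam / 2) * (u s) ^ 2
          + ((((n : ℝ) - 1) * lam / n + 2 - (n : ℝ))) * (v s) ^ 2)
      volume (-T / 2) (T / 2) := by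
    apply ContinuousOn.intervalIntegrable
    rw [uIcc_of_le hle]
    fun_prop
  have hsmall_int : IntervalIntegrable (fun s => (1 / (n:ℝ)) * ((u s) ^ 2 + (v s) ^ 2))
      volume (-T / 2) (T / 2) := by
    apply ContinuousOn.intervalIntegrable
    rw [uIcc_of_le hle]
    fun_prop
  -- integrate by parts: replace the antisymmetric cross term by 2 u g
  have step2 : (∫ s in (-T / 2)..(T / 2),
        (((n : ℝ) - 1) / n) * (f s) ^ 2 + (1 / 2) * (g s) ^ 2
          + (((n : ℝ) - 2) / (2 * n)) * Real.sqrt lam *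
              (u s * g s - f s * v s)
          + (lam / 2) * (u s) ^ 2
          + ((((n : ℝ) - 1) * lam / n + 2 - (n : ℝ))) * (v s) ^ 2)
      = (∫ s in (-T / 2)..(T / 2),
        (((n : ℝ) - 1) / n) * (f s) ^ 2 + (1 / 2) * (g s) ^ 2
          + (((n : ℝ) - 2) / (2 * n)) * Real.sqrt lam * (2 * (u s * g s))
          + (lam / 2) * (u s) ^ 2
          + ((((n : ℝ) - 1) * lam / n + 2 - (n : ℝ))) * (v s) ^ 2) := by
    have hpt : ∀ s : ℝ,
        (((n : ℝ) - 1) / n) * (f s) ^ 2 + (1 / 2) * (g s) ^ 2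
          + (((n : ℝ) - 2) / (2 * n)) * Real.sqrt lam * (2 * (u s * g s))
          + (lam / 2) * (u s) ^ 2
          + ((((n : ℝ) - 1) * lam / n + 2 - (n : ℝ))) * (v s) ^ 2
        = ((((n : ℝ) - 1) / n) * (f s) ^ 2 + (1 / 2) * (g s) ^ 2
          + (((n : ℝ) - 2) / (2 * n)) * Real.sqrt lam *
              (u s * g s - f s * v s)
          + (lam / 2) * (u s) ^ 2
          + ((((n : ℝ) - 1) * lam / n + 2 - (n : ℝ))) * (v s) ^ 2)
          + ((((n : ℝ) - 2) / (2 * n)) * Real.sqrt lam) *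
              (f s * v s + u s * g s) := by
      intro s; ring
    rw [intervalIntegral.integral_congr (fun s _ => hpt s),
      intervalIntegral.integral_add hG_int
        (hcross_int.const_mul ((((n : ℝ) - 2) / (2 * n)) * Real.sqrt lam)),
      intervalIntegral.integral_const_mul, hFTC]
    ring
  rw [ge_iff_le, step1, step2,
    show (1 / (n : ℝ)) * ∫ s in (-T / 2)..(T / 2), (u s) ^ 2 + (v s) ^ 2
      = ∫ s in (-T / 2)..(T / 2), (1 / (n : ℝ)) * ((u s) ^ 2 + (v s) ^ 2)
      from (intervalIntegral.integral_const_mul _ _).symm]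
  apply intervalIntegral.integral_mono_on hle hsmall_int hG2_int
  intro x hx
  exact key_alg (n : ℝ) lam (Real.sqrt lam) (u x) (v x) (f x) (g x) hn3 hlam hsq
end
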